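/- arXiv:1611.03009 — 3 statements merged into one kernel-verified Lean document; each statement's English description precedes it below -/
import Mathlib

section
/- Let X be a random vector in ℝ^d with absolutely continuous distribution, let f, g : ℝ^d → ℝ be measurable, and suppose that for some α > 0 and constants C_f, C_g ≥ 0 one has ‖P_{f(X)} − P_{f(X)+u}‖_var ≤ C_f·|u|^α and ‖P_{g(X)} − P_{g(X)+u}‖_var ≤ C_g·|u|^α for all u ∈ ℝ. Then ‖P_{f(X)} − P_{g(X)}‖_var ≤ C·‖f − g‖_{L¹(dP_X)}^{α/(α+1)}, where C = (C_f + C_g)^{1/(α+1)}·(E|ν|^α + √(π/2)) and ν is a standard Gaussian random variable. -/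
open MeasureTheory ProbabilityTheory

/-- Total variation distance between two (finite) measures, via the Jordan-type
decomposition given by measure subtraction: `‖μ - ν‖_var = (μ - ν)(univ) + (ν - μ)(univ)`. -/
noncomputable def tvDist {α : Type*} [MeasurableSpace α] (μ ν : Measure α) : ℝ :=
  ((μ - ν) Set.univ + (ν - μ) Set.univ).toReal

/-!
Smooth both laws by convolving with `γ = N(0, σ²)`. Since `P_F ∗ γ` is a `γ`-mixture of the
translates of `P_F`, the Hölder condition puts it within `C_F σ^α E|ν|^α` of `P_F` in total
variation. Since `P_F ∗ γ` is also the `P`-mixture of the Gaussians `N(F ω, σ²)`, and two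
Gaussians of equal variance are at distance at most `√(π/2) |a - b| / σ`, the smoothed laws of
`F` and `G` are within `√(π/2) ‖F - G‖₁ / σ` of each other. Balancing the two error terms in `σ`
gives the exponent `α / (α + 1)`.
-/

open Set
open scoped ENNReal NNReal Real Topology

section TotalVariation

variable {α : Type*} [MeasurableSpace α] {μ ν ρ : Measure α} {s : Set α}

lemma tvDist_nonneg (μ ν : Measure α) : 0 ≤ tvDist μ ν := ENNReal.toReal_nonneg

lemma tvDist_comm (μ ν : Measure α) : tvDist μ ν = tvDist ν μ := by
  rw [tvDist, tvDist, add_comm]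

variable [IsFiniteMeasure μ] [IsFiniteMeasure ν]

lemma tvDist_eq_measureReal_sub : tvDist μ ν = (μ - ν).real univ + (ν - μ).real univ :=
  ENNReal.toReal_add (measure_ne_top _ _) (measure_ne_top _ _)

lemma measureReal_sub_measureReal_le (s : Set α) : μ.real s - ν.real s ≤ (μ - ν).real univ := by
  have hle : μ ≤ (μ - ν) + ν := Measure.sub_le_iff_le_add.1 le_rfl
  have : μ.real s ≤ (μ - ν).real s + ν.real s := by
    rw [← measureReal_add_apply]
    exact ENNReal.toReal_mono (measure_ne_top _ _) (hle s)
  linarith [measureReal_mono (μ := μ - ν) (subset_univ s)]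

lemma measureReal_sub_univ_of_isHahnDecomposition (hs : IsHahnDecomposition ν μ s) :
    (μ - ν).real univ = μ.real s - ν.real s := by
  have hνμ : ν s ≤ μ s := by simpa using hs.le_on s
  have hs_sub : (μ - ν) s = μ s - ν s := by
    rw [← Measure.restrict_apply_self,
      Measure.restrict_sub_eq_restrict_sub_restrict hs.measurableSet,
      Measure.sub_apply hs.measurableSet hs.le_on, Measure.restrict_apply_self,
      Measure.restrict_apply_self]
  have hsc_sub : (μ - ν) sᶜ = 0 := Measure.sub_apply_eq_zero_of_isHahnDecomposition hs.compl
  rw [← measureReal_add_measureReal_compl hs.measurableSet, measureReal_def, measureReal_def,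
    hs_sub, hsc_sub, ENNReal.toReal_sub_of_le hνμ (measure_ne_top _ _)]
  simp [measureReal_def]

lemma le_tvDist (s : Set α) :
    (μ.real s - ν.real s) + (ν.real sᶜ - μ.real sᶜ) ≤ tvDist μ ν := by
  rw [tvDist_eq_measureReal_sub]
  linarith [measureReal_sub_measureReal_le (μ := μ) (ν := ν) s,
    measureReal_sub_measureReal_le (μ := ν) (ν := μ) sᶜ]

lemma tvDist_eq_of_isHahnDecomposition (hs : IsHahnDecomposition ν μ s) :
    tvDist μ ν = (μ.real s - ν.real s) + (ν.real sᶜ - μ.real sᶜ) := by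
  rw [tvDist_eq_measureReal_sub, measureReal_sub_univ_of_isHahnDecomposition hs,
    measureReal_sub_univ_of_isHahnDecomposition hs.compl]

lemma tvDist_triangle [IsFiniteMeasure ρ] : tvDist μ ρ ≤ tvDist μ ν + tvDist ν ρ := by
  obtain ⟨s, hs⟩ := exists_isHahnDecomposition ρ μ
  rw [tvDist_eq_of_isHahnDecomposition hs]
  linarith [le_tvDist (μ := μ) (ν := ν) s, le_tvDist (μ := ν) (ν := ρ) s]

lemma measureReal_bind_eq_integral {β : Type*} [MeasurableSpace β] {ρ : Measure β}
    {κ : β → Measure α} (hκ : Measurable κ) [∀ b, IsFiniteMeasure (κ b)] {t : Set α}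
    (ht : MeasurableSet t) : (ρ.bind κ).real t = ∫ b, (κ b).real t ∂ρ := by
  rw [measureReal_def, Measure.bind_apply ht hκ.aemeasurable,
    ← integral_toReal (Measure.measurable_measure.1 hκ t ht).aemeasurable
      (ae_of_all _ fun b => measure_lt_top _ _)]
  rfl

lemma integrable_measureReal_apply {β : Type*} [MeasurableSpace β] {ρ : Measure β}
    [IsFiniteMeasure ρ] {κ : β → Measure α} (hκ : Measurable κ) [∀ b, IsProbabilityMeasure (κ b)]
    {t : Set α} (ht : MeasurableSet t) : Integrable (fun b => (κ b).real t) ρ :=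
  (integrable_const (1 : ℝ)).mono'
    (Measure.measurable_measure.1 hκ t ht).ennreal_toReal.aestronglyMeasurable
    (ae_of_all _ fun b => by
      rw [Real.norm_eq_abs, abs_of_nonneg measureReal_nonneg]
      exact measureReal_le_one)

lemma tvDist_bind_le {β : Type*} [MeasurableSpace β] (ρ : Measure β) [IsProbabilityMeasure ρ]
    {κ₁ κ₂ : β → Measure α} (hκ₁ : Measurable κ₁) (hκ₂ : Measurable κ₂)
    [∀ b, IsProbabilityMeasure (κ₁ b)] [∀ b, IsProbabilityMeasure (κ₂ b)]
    {B : β → ℝ} (hB : Integrable B ρ) (hκB : ∀ b, tvDist (κ₁ b) (κ₂ b) ≤ B b) :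
    tvDist (ρ.bind κ₁) (ρ.bind κ₂) ≤ ∫ b, B b ∂ρ := by
  have := isProbabilityMeasure_bind hκ₁.aemeasurable (ae_of_all ρ fun b => inferInstance)
  have := isProbabilityMeasure_bind hκ₂.aemeasurable (ae_of_all ρ fun b => inferInstance)
  obtain ⟨s, hs⟩ := exists_isHahnDecomposition (ρ.bind κ₂) (ρ.bind κ₁)
  have hm := hs.measurableSet
  have hi₁ {t : Set α} (ht : MeasurableSet t) := integrable_measureReal_apply (ρ := ρ) hκ₁ ht
  have hi₂ {t : Set α} (ht : MeasurableSet t) := integrable_measureReal_apply (ρ := ρ) hκ₂ ht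
  rw [tvDist_eq_of_isHahnDecomposition hs, measureReal_bind_eq_integral hκ₁ hm,
    measureReal_bind_eq_integral hκ₂ hm, measureReal_bind_eq_integral hκ₁ hm.compl,
    measureReal_bind_eq_integral hκ₂ hm.compl, ← integral_sub (hi₁ hm) (hi₂ hm),
    ← integral_sub (hi₂ hm.compl) (hi₁ hm.compl)]
  have hs₁ : Integrable (fun b => (κ₁ b).real s - (κ₂ b).real s) ρ := (hi₁ hm).sub (hi₂ hm)
  have hs₂ : Integrable (fun b => (κ₂ b).real sᶜ - (κ₁ b).real sᶜ) ρ :=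
    (hi₂ hm.compl).sub (hi₁ hm.compl)
  rw [← integral_add hs₁ hs₂]
  exact integral_mono (hs₁.add hs₂) hB fun b => (le_tvDist s).trans (hκB b)

lemma measureReal_withDensity_ofReal {m : Measure α} {p : α → ℝ} (hp : Integrable p m)
    (hp0 : 0 ≤ᵐ[m] p) {t : Set α} (ht : MeasurableSet t) :
    (m.withDensity fun x => ENNReal.ofReal (p x)).real t = ∫ x in t, p x ∂m := by
  rw [measureReal_def, withDensity_apply _ ht,
    ← ofReal_integral_eq_lintegral_ofReal hp.restrict (ae_restrict_of_ae hp0),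
    ENNReal.toReal_ofReal (setIntegral_nonneg_of_ae_restrict (ae_restrict_of_ae hp0))]

lemma tvDist_withDensity_le (m : Measure α) {p q : α → ℝ} (hp : Integrable p m)
    (hq : Integrable q m) (hp0 : 0 ≤ᵐ[m] p) (hq0 : 0 ≤ᵐ[m] q) :
    tvDist (m.withDensity fun x => ENNReal.ofReal (p x))
      (m.withDensity fun x => ENNReal.ofReal (q x)) ≤ ∫ x, |p x - q x| ∂m := by
  have := isFiniteMeasure_withDensity_ofReal hp.2
  have := isFiniteMeasure_withDensity_ofReal hq.2
  obtain ⟨s, hs⟩ := exists_isHahnDecomposition (m.withDensity fun x => ENNReal.ofReal (q x))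
    (m.withDensity fun x => ENNReal.ofReal (p x))
  have hm := hs.measurableSet
  have hpq : Integrable (fun x => |p x - q x|) m := (hp.sub hq).abs
  rw [tvDist_eq_of_isHahnDecomposition hs, measureReal_withDensity_ofReal hp hp0 hm,
    measureReal_withDensity_ofReal hq hq0 hm, measureReal_withDensity_ofReal hp hp0 hm.compl,
    measureReal_withDensity_ofReal hq hq0 hm.compl, ← integral_sub hp.restrict hq.restrict,
    ← integral_sub hq.restrict hp.restrict, ← integral_add_compl hm hpq]
  gcongr ?_ + ?_
  · exact setIntegral_mono (hp.sub hq).restrict hpq.restrict fun x => le_abs_self _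
  · exact setIntegral_mono (hq.sub hp).restrict hpq.restrict fun x => by
      rw [abs_sub_comm]; exact le_abs_self _

end TotalVariation

section Convolution

variable {M : Type*} [AddMonoid M] [MeasurableSpace M] [MeasurableAdd₂ M]

lemma Measure.measurable_map_add_const (ν : Measure M) [SFinite ν] :
    Measurable fun y : M => ν.map (· + y) := by
  refine Measure.measurable_of_measurable_coe _ fun t ht => ?_
  have hA : MeasurableSet {p : M × M | p.1 + p.2 ∈ t} := measurable_add ht
  simp_rw [Measure.map_apply (measurable_add_const _) ht]
  exact measurable_measure_prodMk_right hA

lemma Measure.conv_map_eq_bind {β : Type*} [MeasurableSpace β] (ν : Measure M) [SFinite ν]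
    (μ : Measure β) [SFinite μ] {h : β → M} (hh : Measurable h) :
    ν ∗ μ.map h = μ.bind fun x => ν.map (· + h x) := by
  ext t ht
  have hA : MeasurableSet ((fun p : M × M => p.1 + p.2) ⁻¹' t) := measurable_add ht
  have hκ : Measurable fun x => ν.map (· + h x) := (Measure.measurable_map_add_const ν).comp hh
  rw [Measure.bind_apply ht hκ.aemeasurable,
    Measure.conv, Measure.map_apply measurable_add ht, Measure.prod_apply_symm hA,
    lintegral_map (measurable_measure_prodMk_right hA) hh]
  simp_rw [Measure.map_apply (measurable_add_const _) ht]
  rfl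

lemma tvDist_conv_le (μ ρ : Measure M) [IsProbabilityMeasure μ] [IsProbabilityMeasure ρ]
    {B : M → ℝ} (hB : Integrable B ρ) (hμB : ∀ u, tvDist μ (μ.map (· + u)) ≤ B u) :
    tvDist μ (μ ∗ ρ) ≤ ∫ u, B u ∂ρ := by
  have : ∀ u, IsProbabilityMeasure (μ.map (· + u)) :=
    fun u => Measure.isProbabilityMeasure_map (measurable_add_const u).aemeasurable
  have hμ : ρ.bind (fun _ => μ) = μ := by rw [Measure.bind_const, measure_univ, one_smul]
  have hconv : μ ∗ ρ = ρ.bind fun u => μ.map (· + u) := by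
    simpa using Measure.conv_map_eq_bind μ ρ measurable_id
  calc tvDist μ (μ ∗ ρ) = tvDist (ρ.bind fun _ => μ) (ρ.bind fun u => μ.map (· + u)) := by
        rw [hμ, hconv]
    _ ≤ ∫ u, B u ∂ρ := tvDist_bind_le ρ measurable_const (Measure.measurable_map_add_const μ) hB hμB

lemma tvDist_conv_map_le {β : Type*} [MeasurableSpace β] (ν : Measure M) [IsProbabilityMeasure ν]
    (μ : Measure β) [IsProbabilityMeasure μ] {f g : β → M} (hf : Measurable f) (hg : Measurable g)
    {B : β → ℝ} (hB : Integrable B μ)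
    (hνB : ∀ x, tvDist (ν.map (· + f x)) (ν.map (· + g x)) ≤ B x) :
    tvDist (ν ∗ μ.map f) (ν ∗ μ.map g) ≤ ∫ x, B x ∂μ := by
  have : ∀ y, IsProbabilityMeasure (ν.map (· + y)) :=
    fun y => Measure.isProbabilityMeasure_map (measurable_add_const y).aemeasurable
  have hκf : Measurable fun x => ν.map (· + f x) := (Measure.measurable_map_add_const ν).comp hf
  have hκg : Measurable fun x => ν.map (· + g x) := (Measure.measurable_map_add_const ν).comp hg
  rw [Measure.conv_map_eq_bind ν μ hf, Measure.conv_map_eq_bind ν μ hg]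
  exact tvDist_bind_le μ hκf hκg hB hνB

end Convolution

section Gaussian

variable {v : ℝ≥0}

lemma gaussianPDFReal_le_of_sq_le {c d x : ℝ} (h : (x - c) ^ 2 ≤ (x - d) ^ 2) :
    gaussianPDFReal d v x ≤ gaussianPDFReal c v x := by
  simp only [gaussianPDFReal]
  gcongr

lemma gaussianPDFReal_le_inv_sqrt (c x : ℝ) : gaussianPDFReal c v x ≤ (√(2 * π * v))⁻¹ := by
  simpa [gaussianPDFReal] using
    gaussianPDFReal_le_of_sq_le (v := v) (c := x) (d := c) (x := x) (by simpa using sq_nonneg _)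

lemma setIntegral_Iic_sub_gaussianPDFReal_le {a b : ℝ} (hab : a ≤ b) (m : ℝ) :
    ∫ x in Iic m, (gaussianPDFReal a v x - gaussianPDFReal b v x) ≤ (b - a) / √(2 * π * v) := by
  set φ := gaussianPDFReal a v
  have hφ : Integrable φ := integrable_gaussianPDFReal a v
  have hshift : ∫ x in Iic m, gaussianPDFReal b v x = ∫ x in Iic (m - (b - a)), φ x := by
    have := (measurePreserving_sub_right volume (b - a)).setIntegral_preimage_emb
      (measurableEmbedding_subRight (b - a)) φ (Iic (m - (b - a)))
    simpa [φ, gaussianPDFReal_sub] using this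
  rw [integral_sub hφ.integrableOn (integrable_gaussianPDFReal b v).integrableOn, hshift,
    intervalIntegral.integral_Iic_sub_Iic hφ.integrableOn hφ.integrableOn]
  have := intervalIntegral.norm_integral_le_of_norm_le_const (a := m - (b - a)) (b := m)
    (f := φ) fun x _ => (Real.norm_of_nonneg (gaussianPDFReal_nonneg a v x)).trans_le
      (gaussianPDFReal_le_inv_sqrt a x)
  rw [show m - (m - (b - a)) = b - a by ring, abs_of_nonneg (sub_nonneg.2 hab),
    inv_mul_eq_div] at this
  exact (le_abs_self _).trans this

lemma integral_abs_sub_gaussianPDFReal_le (hv : v ≠ 0) (a b : ℝ) :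
    ∫ x, |gaussianPDFReal a v x - gaussianPDFReal b v x| ≤ 2 * |a - b| / √(2 * π * v) := by
  wlog hab : a ≤ b generalizing a b
  · simpa only [abs_sub_comm] using this b a (le_of_not_ge hab)
  set m := (a + b) / 2 with hm
  set φ := gaussianPDFReal a v
  set ψ := gaussianPDFReal b v
  -- `φ ≥ ψ` exactly left of the midpoint `m`, and `∫ (φ - ψ) = 0`.
  have habs : ∀ x, |φ x - ψ x| = 2 * (Iic m).indicator (fun y => φ y - ψ y) x - (φ x - ψ x) := by
    intro x
    by_cases hx : x ∈ Iic m
    · have hx' : x ≤ m := hx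
      rw [indicator_of_mem hx, abs_of_nonneg (sub_nonneg.2 (gaussianPDFReal_le_of_sq_le
        (by nlinarith [mul_nonneg (sub_nonneg.2 hab) (sub_nonneg.2 hx')])))]
      ring
    · have hx' : m < x := not_le.1 hx
      rw [indicator_of_notMem hx, abs_of_nonpos (sub_nonpos.2 (gaussianPDFReal_le_of_sq_le
        (by nlinarith [mul_nonneg (sub_nonneg.2 hab) (sub_nonneg.2 hx'.le)])))]
      ring
  have hφ : Integrable φ := integrable_gaussianPDFReal a v
  have hψ : Integrable ψ := integrable_gaussianPDFReal b v
  have hd : Integrable (fun x => φ x - ψ x) := hφ.sub hψ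
  have hmass : ∫ x, φ x - ψ x = 0 := by
    rw [integral_sub hφ hψ, integral_gaussianPDFReal_eq_one _ hv,
      integral_gaussianPDFReal_eq_one _ hv, sub_self]
  calc ∫ x, |φ x - ψ x| = 2 * ∫ x in Iic m, (φ x - ψ x) := by
        simp_rw [habs]
        rw [integral_sub ((hd.indicator measurableSet_Iic).const_mul 2) hd,
          integral_const_mul, integral_indicator measurableSet_Iic, hmass, sub_zero]
    _ ≤ 2 * ((b - a) / √(2 * π * v)) := by
        gcongr
        exact setIntegral_Iic_sub_gaussianPDFReal_le hab m
    _ = 2 * |a - b| / √(2 * π * v) := by rw [abs_sub_comm, abs_of_nonneg (sub_nonneg.2 hab)]; ring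

lemma tvDist_gaussianReal_le (hv : v ≠ 0) (a b : ℝ) :
    tvDist (gaussianReal a v) (gaussianReal b v) ≤ 2 * |a - b| / √(2 * π * v) := by
  rw [gaussianReal_of_var_ne_zero _ hv, gaussianReal_of_var_ne_zero _ hv]
  exact (tvDist_withDensity_le volume (integrable_gaussianPDFReal a v)
    (integrable_gaussianPDFReal b v) (ae_of_all _ (gaussianPDFReal_nonneg a v))
    (ae_of_all _ (gaussianPDFReal_nonneg b v))).trans (integral_abs_sub_gaussianPDFReal_le hv a b)

lemma integrable_abs_rpow_gaussianReal {α : ℝ} (hα : 0 < α) (μ : ℝ) (v : ℝ≥0) :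
    Integrable (fun x => |x| ^ α) (gaussianReal μ v) := by
  simpa using (memLp_id_gaussianReal (μ := μ) (v := v) (.mk α hα.le)).integrable_norm_rpow
    (by simpa [← NNReal.coe_eq_zero] using hα.ne') ENNReal.coe_ne_top

lemma integral_abs_rpow_gaussianReal_scale (α : ℝ) {σ : ℝ} (hσ : 0 ≤ σ) :
    ∫ x, |x| ^ α ∂(gaussianReal 0 (.mk (σ ^ 2) (sq_nonneg σ))) =
      σ ^ α * ∫ x, |x| ^ α ∂(gaussianReal 0 1) := by
  have hmap : (gaussianReal 0 1).map (σ * ·) = gaussianReal 0 (.mk (σ ^ 2) (sq_nonneg σ)) := by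
    simpa using gaussianReal_map_const_mul (μ := 0) (v := 1) σ
  rw [← hmap, integral_map (measurable_const_mul σ).aemeasurable
    (by fun_prop : Measurable fun x : ℝ => |x| ^ α).aestronglyMeasurable, ← integral_const_mul]
  simp_rw [abs_mul, Real.mul_rpow (abs_nonneg σ) (abs_nonneg _), abs_of_nonneg hσ]

end Gaussian

lemma two_div_sqrt_two_pi_mul_sq_le {σ : ℝ} (hσ : 0 < σ) : 2 / √(2 * π * σ ^ 2) ≤ √(π / 2) / σ := by
  have hπ : √(2 * π) * √(π / 2) = π := by
    rw [← Real.sqrt_mul (by positivity), show 2 * π * (π / 2) = π ^ 2 by ring,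
      Real.sqrt_sq Real.pi_pos.le]
  rw [Real.sqrt_mul (by positivity), Real.sqrt_sq hσ.le, div_le_div_iff₀ (by positivity) hσ]
  nlinarith [Real.two_le_pi]

lemma tvDist_map_le_of_gaussian_smoothing {Ω : Type*} [MeasurableSpace Ω] (P : Measure Ω)
    [IsProbabilityMeasure P] {F G : Ω → ℝ} (hF : Measurable F) (hG : Measurable G)
    (hFG : Integrable (fun ω => F ω - G ω) P) {α Cf Cg : ℝ} (hα : 0 < α)
    (hCf : ∀ u, tvDist (P.map F) (P.map fun ω => F ω + u) ≤ Cf * |u| ^ α)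
    (hCg : ∀ u, tvDist (P.map G) (P.map fun ω => G ω + u) ≤ Cg * |u| ^ α) {σ : ℝ} (hσ : 0 < σ) :
    tvDist (P.map F) (P.map G) ≤ (Cf + Cg) * σ ^ α * ∫ x, |x| ^ α ∂(gaussianReal 0 1) +
      √(π / 2) * (∫ ω, |F ω - G ω| ∂P) / σ := by
  set E := ∫ x, |x| ^ α ∂(gaussianReal 0 1)
  set v : ℝ≥0 := .mk (σ ^ 2) (sq_nonneg σ)
  set γ := gaussianReal 0 v
  have := Measure.isProbabilityMeasure_map (μ := P) hF.aemeasurable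
  have := Measure.isProbabilityMeasure_map (μ := P) hG.aemeasurable
  have smooth {H : Ω → ℝ} (hH : Measurable H) {C : ℝ}
      (hC : ∀ u, tvDist (P.map H) (P.map fun ω => H ω + u) ≤ C * |u| ^ α) :
      tvDist (P.map H) (γ ∗ P.map H) ≤ C * (σ ^ α * E) := by
    have := Measure.isProbabilityMeasure_map (μ := P) hH.aemeasurable
    rw [Measure.conv_comm, ← integral_abs_rpow_gaussianReal_scale α hσ.le, ← integral_const_mul]
    refine tvDist_conv_le _ _ ((integrable_abs_rpow_gaussianReal hα 0 v).const_mul C) fun u => ?_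
    rw [Measure.map_map (measurable_add_const u) hH]
    exact hC u
  have hv : v ≠ 0 := by simpa [v, ← NNReal.coe_eq_zero] using hσ.ne'
  have hmiddle : tvDist (γ ∗ P.map F) (γ ∗ P.map G) ≤ √(π / 2) * (∫ ω, |F ω - G ω| ∂P) / σ := by
    refine (tvDist_conv_map_le γ P hF hG (hFG.abs.const_mul (2 / √(2 * π * v)))
      fun ω => ?_).trans ?_
    · rw [gaussianReal_map_add_const, gaussianReal_map_add_const, zero_add, zero_add, mul_comm,
        ← mul_div_assoc, mul_comm]
      exact tvDist_gaussianReal_le hv _ _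
    · rw [integral_const_mul]
      exact (mul_le_mul_of_nonneg_right (two_div_sqrt_two_pi_mul_sq_le hσ)
        (integral_nonneg fun ω => abs_nonneg _)).trans_eq (by ring)
  have hFG_tri := tvDist_triangle (μ := P.map F) (ν := γ ∗ P.map F) (ρ := P.map G)
  have hGF_tri := tvDist_triangle (μ := γ ∗ P.map F) (ν := γ ∗ P.map G) (ρ := P.map G)
  have hF_smooth := smooth hF hCf
  have hG_smooth := smooth hG hCg
  rw [tvDist_comm] at hG_smooth
  linarith

-- At `σ = (δ / c) ^ (1 / (α + 1))` the two error terms `c σ ^ α` and `δ / σ` coincide.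
lemma mul_rpow_balance {α c δ : ℝ} (hα : α + 1 ≠ 0) (hc : 0 < c) (hδ : 0 < δ) :
    c * ((δ / c) ^ (1 / (α + 1))) ^ α = c ^ (1 / (α + 1)) * δ ^ (α / (α + 1)) ∧
      δ / (δ / c) ^ (1 / (α + 1)) = c ^ (1 / (α + 1)) * δ ^ (α / (α + 1)) := by
  set t := 1 / (α + 1)
  set s := α / (α + 1)
  have hts : t + s = 1 := by simp only [t, s]; field_simp; ring
  have hsplit {x : ℝ} (hx : 0 < x) : x = x ^ t * x ^ s := by
    rw [← Real.rpow_add hx, hts, Real.rpow_one]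
  have hσα : ((δ / c) ^ t) ^ α = δ ^ s / c ^ s := by
    rw [← Real.rpow_mul (div_nonneg hδ.le hc.le), show t * α = s by simp only [t, s]; field_simp,
      Real.div_rpow hδ.le hc.le]
  have := Real.rpow_pos_of_pos hc s
  have := Real.rpow_pos_of_pos hc t
  have := Real.rpow_pos_of_pos hδ t
  constructor
  · rw [hσα]
    nth_rewrite 1 [hsplit hc]
    field_simp
  · rw [Real.div_rpow hδ.le hc.le]
    nth_rewrite 1 [hsplit hδ]
    field_simp

lemma le_mul_rpow_of_forall_le_mul_rpow_add_div {α C Δ A B T : ℝ} (hα : 0 < α) (hC : 0 ≤ C)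
    (hΔ : 0 ≤ Δ) (hA : 0 ≤ A) (hB : 0 ≤ B) (hT : ∀ σ > 0, T ≤ C * σ ^ α * A + B * Δ / σ) :
    T ≤ C ^ (1 / (α + 1)) * (A + B) * Δ ^ (α / (α + 1)) := by
  have hlim : Filter.Tendsto (fun ε => (C + ε) ^ (1 / (α + 1)) * (A + B) * (Δ + ε) ^ (α / (α + 1)))
      (𝓝[>] 0) (𝓝 (C ^ (1 / (α + 1)) * (A + B) * Δ ^ (α / (α + 1)))) := by
    have hcont : Continuous fun ε : ℝ =>
        (C + ε) ^ (1 / (α + 1)) * (A + B) * (Δ + ε) ^ (α / (α + 1)) := by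
      have ht : 0 ≤ 1 / (α + 1) := by positivity
      have hs : 0 ≤ α / (α + 1) := by positivity
      fun_prop (disch := simp [ht, hs])
    simpa using (hcont.tendsto 0).mono_left nhdsWithin_le_nhds
  -- Balancing with `C + ε` and `Δ + ε` keeps `σ` positive even when `C` or `Δ` vanishes.
  refine ge_of_tendsto hlim (eventually_nhdsWithin_of_forall fun ε (hε : 0 < ε) => ?_)
  obtain ⟨hcσ, hδσ⟩ := mul_rpow_balance (by positivity : α + 1 ≠ 0) (by positivity : 0 < C + ε)
    (by positivity : 0 < Δ + ε)
  set σ := ((Δ + ε) / (C + ε)) ^ (1 / (α + 1))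
  have hσ : 0 < σ := by positivity
  calc T ≤ C * σ ^ α * A + B * Δ / σ := hT σ hσ
    _ ≤ (C + ε) * σ ^ α * A + B * ((Δ + ε) / σ) := by
        rw [mul_div_assoc]
        gcongr <;> linarith
    _ = _ := by rw [hcσ, hδσ]; ring

theorem tvDist_map_le_integral_abs_sub_rpow {Ω : Type*} [MeasurableSpace Ω] (P : Measure Ω)
    [IsProbabilityMeasure P] {F G : Ω → ℝ} (hF : Measurable F) (hG : Measurable G)
    (hFG : Integrable (fun ω => F ω - G ω) P) {α Cf Cg : ℝ} (hα : 0 < α)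
    (hCf : ∀ u, tvDist (P.map F) (P.map fun ω => F ω + u) ≤ Cf * |u| ^ α)
    (hCg : ∀ u, tvDist (P.map G) (P.map fun ω => G ω + u) ≤ Cg * |u| ^ α) :
    tvDist (P.map F) (P.map G) ≤
      (Cf + Cg) ^ (1 / (α + 1)) * ((∫ x, |x| ^ α ∂(gaussianReal 0 1)) + √(π / 2)) *
        (∫ ω, |F ω - G ω| ∂P) ^ (α / (α + 1)) := by
  have hCf0 : 0 ≤ Cf := by simpa using (tvDist_nonneg _ _).trans (hCf 1)
  have hCg0 : 0 ≤ Cg := by simpa using (tvDist_nonneg _ _).trans (hCg 1)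
  exact le_mul_rpow_of_forall_le_mul_rpow_add_div hα (add_nonneg hCf0 hCg0)
    (integral_nonneg fun ω => abs_nonneg _) (integral_nonneg fun x => by positivity)
    (Real.sqrt_nonneg _) fun σ hσ => tvDist_map_le_of_gaussian_smoothing P hF hG hFG hα hCf hCg hσ

theorem stmt0_general {d : ℕ} {Ω : Type*} [MeasurableSpace Ω] (P : Measure Ω) [IsProbabilityMeasure P]
    (X : Ω → (Fin d → ℝ)) (hX : Measurable X)
    (f g : (Fin d → ℝ) → ℝ) (hf : Measurable f) (hg : Measurable g)
    (α : ℝ) (hα : 0 < α) (Cf Cg : ℝ)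
    (h1 : ∀ u : ℝ,
      tvDist (P.map (fun ω => f (X ω))) (P.map (fun ω => f (X ω) + u)) ≤ Cf * |u| ^ α)
    (h2 : ∀ u : ℝ,
      tvDist (P.map (fun ω => g (X ω))) (P.map (fun ω => g (X ω) + u)) ≤ Cg * |u| ^ α)
    (hint : Integrable (fun x => f x - g x) (P.map X)) :
    tvDist (P.map (fun ω => f (X ω))) (P.map (fun ω => g (X ω))) ≤
      (Cf + Cg) ^ (1 / (α + 1)) *
        ((∫ x, |x| ^ α ∂(gaussianReal 0 1)) + Real.sqrt (Real.pi / 2)) *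
        (∫ x, |f x - g x| ∂(P.map X)) ^ (α / (α + 1)) := by
  rw [integral_map hX.aemeasurable hint.abs.aestronglyMeasurable]
  exact tvDist_map_le_integral_abs_sub_rpow P (hf.comp hX) (hg.comp hX)
    (hint.comp_measurable hX) hα h1 h2

/-- **Theorem 1.** If the distributions of `f(X)` and `g(X)` are Hölder-continuous of order `α`
under translations (in total variation), then
`‖P_{f(X)} - P_{g(X)}‖_var ≤ C ‖f - g‖₁^{α/(α+1)}`, where
`C = (C_f + C_g)^{1/(α+1)} (E|ν|^α + √(π/2))` and `ν` is a standard Gaussian. -/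
theorem stmt0 {d : ℕ} {Ω : Type*} [MeasurableSpace Ω] (P : Measure Ω) [IsProbabilityMeasure P]
    (X : Ω → (Fin d → ℝ)) (hX : Measurable X)
    (habs : P.map X ≪ (volume : Measure (Fin d → ℝ)))
    (f g : (Fin d → ℝ) → ℝ) (hf : Measurable f) (hg : Measurable g)
    (α : ℝ) (hα : 0 < α) (Cf Cg : ℝ) (hCf : 0 ≤ Cf) (hCg : 0 ≤ Cg)
    (h1 : ∀ u : ℝ,
      tvDist (P.map (fun ω => f (X ω))) (P.map (fun ω => f (X ω) + u)) ≤ Cf * |u| ^ α)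
    (h2 : ∀ u : ℝ,
      tvDist (P.map (fun ω => g (X ω))) (P.map (fun ω => g (X ω) + u)) ≤ Cg * |u| ^ α)
    (hint : Integrable (fun x => f x - g x) (P.map X)) :
    tvDist (P.map (fun ω => f (X ω))) (P.map (fun ω => g (X ω))) ≤
      (Cf + Cg) ^ (1 / (α + 1)) *
        ((∫ x, |x| ^ α ∂(gaussianReal 0 1)) + Real.sqrt (Real.pi / 2)) *
        (∫ x, |f x - g x| ∂(P.map X)) ^ (α / (α + 1)) :=
  stmt0_general P X hX f g hf hg α hα Cf Cg h1 h2 hint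
end

section
/- Let f(x) = Σ_{k=1}^n (a_k cos kx + b_k sin kx) be a trigonometric polynomial of degree at most n (with zero constant term). If all derivatives of f of orders 1 through 2n vanish at the point x = 0, i.e. f^{(l)}(0) = 0 for l = 1, …, 2n, then all coefficients vanish: a_k = b_k = 0 for all k = 1, …, n. Consequently, a non-constant trigonometric polynomial of degree n can have at most its first 2n − 1 derivatives vanish at any fixed point. -/
/-!
The derivatives of `f` at `0` of orders `2m` and `2m + 1` are, up to sign, the moments
`∑ a_k k^(2m)` and `∑ b_k k^(2m+1)`. Hence the vectors `(a_k k²)_k` and `(b_k k)_k` are orthogonal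
to the `n` powers `(k²)^m`, `m < n`, of the `n` distinct nodes `k²`; since the Vandermonde matrix
of distinct nodes is invertible, both vectors vanish.
-/

open Finset Real

theorem Finset.eq_zero_of_forall_sum_mul_pow_eq_zero {ι K : Type*} [Field K] [DecidableEq ι]
    {s : Finset ι} {v : ι → K} (hv : Set.InjOn v s) {d : ι → K}
    (hd : ∀ m < #s, ∑ i ∈ s, d i * v i ^ m = 0) : ∀ i ∈ s, d i = 0 := by
  intro i hi
  -- Pair the moments with the Lagrange basis polynomial of `i`, which has degree `< #s`.
  set p := Lagrange.basis s v i
  have hdeg : p.natDegree < #s := by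
    rw [Lagrange.natDegree_basis hv hi]
    exact Nat.sub_one_lt (card_ne_zero_of_mem hi)
  calc d i = ∑ j ∈ s, d j * p.eval (v j) := by
        rw [sum_eq_single_of_mem i hi fun j hj hji => by
            rw [Lagrange.eval_basis_of_ne hji.symm hj, mul_zero],
          Lagrange.eval_basis_self hv hi, mul_one]
    _ = ∑ m ∈ range #s, p.coeff m * ∑ j ∈ s, d j * v j ^ m := by
        simp_rw [Polynomial.eval_eq_sum_range' hdeg, mul_sum]
        rw [sum_comm]
        exact sum_congr rfl fun m _ => sum_congr rfl fun j _ => by ring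
    _ = 0 := sum_eq_zero fun m hm => by rw [hd m (mem_range.1 hm), mul_zero]

section TrigonometricSum

variable {ι : Type*} (s : Finset ι) (ω a b : ι → ℝ)

theorem iteratedDeriv_trigSum_zero (l : ℕ) :
    iteratedDeriv l (fun x => ∑ i ∈ s, (a i * cos (ω i * x) + b i * sin (ω i * x))) 0
      = ∑ i ∈ s, ω i ^ l * (a i * iteratedDeriv l cos 0 + b i * iteratedDeriv l sin 0) := by
  rw [iteratedDeriv_fun_sum fun i _ => by fun_prop]
  refine sum_congr rfl fun i _ => ?_
  rw [iteratedDeriv_fun_add (by fun_prop) (by fun_prop), iteratedDeriv_const_mul_field,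
    iteratedDeriv_const_mul_field, iteratedDeriv_comp_const_mul contDiff_cos,
    iteratedDeriv_comp_const_mul contDiff_sin]
  simp only [mul_zero]
  ring

theorem iteratedDeriv_even_trigSum_zero (m : ℕ) :
    iteratedDeriv (2 * m) (fun x => ∑ i ∈ s, (a i * cos (ω i * x) + b i * sin (ω i * x))) 0
      = (-1) ^ m * ∑ i ∈ s, a i * ω i ^ (2 * m) := by
  simp only [iteratedDeriv_trigSum_zero, iteratedDeriv_even_cos, iteratedDeriv_even_sin,
    Pi.mul_apply, Pi.pow_apply, Pi.neg_apply, Pi.one_apply, cos_zero, sin_zero, mul_sum]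
  exact sum_congr rfl fun i _ => by ring

theorem iteratedDeriv_odd_trigSum_zero (m : ℕ) :
    iteratedDeriv (2 * m + 1) (fun x => ∑ i ∈ s, (a i * cos (ω i * x) + b i * sin (ω i * x))) 0
      = (-1) ^ m * ∑ i ∈ s, b i * ω i ^ (2 * m + 1) := by
  simp only [iteratedDeriv_trigSum_zero, iteratedDeriv_odd_cos, iteratedDeriv_odd_sin,
    Pi.mul_apply, Pi.pow_apply, Pi.neg_apply, Pi.one_apply, cos_zero, sin_zero, mul_sum]
  exact sum_congr rfl fun i _ => by ring

end TrigonometricSum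

/-- If all derivatives of orders `1, …, 2n` of the trigonometric polynomial
`f(x) = ∑_{k=1}^n (a_k cos kx + b_k sin kx)` (zero constant term) vanish at `x = 0`,
then all coefficients vanish: `a_k = b_k = 0` for `k = 1, …, n`. -/
theorem stmt8 (n : ℕ) (a b : ℕ → ℝ)
    (h : ∀ l : ℕ, 1 ≤ l → l ≤ 2 * n →
      iteratedDeriv l
        (fun x : ℝ => ∑ k ∈ Finset.Icc 1 n,
          (a k * Real.cos ((k : ℝ) * x) + b k * Real.sin ((k : ℝ) * x))) 0 = 0) :
    ∀ k : ℕ, 1 ≤ k → k ≤ n → a k = 0 ∧ b k = 0 := by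
  have hsq : Set.InjOn (fun k : ℕ => (k : ℝ) ^ 2) (Icc 1 n) := fun i _ j _ hij => by
    simpa using hij
  have hcard : #(Icc 1 n) = n := by simp
  have hcos : ∀ m < #(Icc 1 n), ∑ k ∈ Icc 1 n, a k * (k : ℝ) ^ 2 * ((k : ℝ) ^ 2) ^ m = 0 := by
    intro m hm
    have hderiv := h (2 * (m + 1)) (by omega) (by omega)
    rw [iteratedDeriv_even_trigSum_zero, mul_eq_zero, or_iff_right (by simp)] at hderiv
    rw [← hderiv]
    exact sum_congr rfl fun k _ => by ring
  have hsin : ∀ m < #(Icc 1 n), ∑ k ∈ Icc 1 n, b k * (k : ℝ) * ((k : ℝ) ^ 2) ^ m = 0 := by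
    intro m hm
    have hderiv := h (2 * m + 1) (by omega) (by omega)
    rw [iteratedDeriv_odd_trigSum_zero, mul_eq_zero, or_iff_right (by simp)] at hderiv
    rw [← hderiv]
    exact sum_congr rfl fun k _ => by ring
  intro k hk1 hkn
  have hk : k ∈ Icc 1 n := mem_Icc.2 ⟨hk1, hkn⟩
  have hk0 : (k : ℝ) ≠ 0 := by positivity
  exact ⟨by simpa [hk0] using eq_zero_of_forall_sum_mul_pow_eq_zero hsq hcos k hk,
    by simpa [hk0] using eq_zero_of_forall_sum_mul_pow_eq_zero hsq hsin k hk⟩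
end

section
/- Let f be a convex, strictly increasing continuous function on [a,b] whose inverse f^{-1} is differentiable on (f(a), f(b)) with strictly positive derivative of f, and let λ be Lebesgue measure restricted to [a,b]. Then for every u with 0 ≤ u ≤ f(b) − f(a), the total variation distance between the pushforward λ∘f^{-1} and the pushforward λ∘f_u^{-1} (where f_u(t) = f(t − u)) equals 2·(f^{-1}(f(a) + u) − a). -/
/-!
Put `μ = λ∘f⁻¹`, let `ν` be its translate by `u`, and put `c = f a + u`, `x₀ = f⁻¹(c)`. Then `ν` lives
on `[c, ∞)`, and convexity gives `μ|[c,∞) ≤ ν`: since the increments of `f` grow to the right, the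
map `y ↦ f⁻¹(f y + u)` is 1-Lipschitz, and it carries `{y | f y + u ∈ s}` onto
`f⁻¹(s ∩ [c, ∞))`. Hence `μ - ν = μ|(-∞,c)` and `ν - μ = ν - μ|[c,∞)`, of masses `x₀ - a` and
`(b - a) - (b - x₀)`.
-/

open MeasureTheory

open Set

theorem tvDist_eq_of_restrict_le {α : Type*} [MeasurableSpace α] {μ ν : Measure α}
    [IsFiniteMeasure μ] {S : Set α} (hS : MeasurableSet S) (hν : ν Sᶜ = 0)
    (h : μ.restrict S ≤ ν) : tvDist μ ν = (μ Sᶜ + (ν univ - μ S)).toReal := by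
  have hνS : ν.restrict S = ν := Measure.restrict_eq_self_of_ae_mem (mem_ae_iff.2 hν)
  have hνSc : ν.restrict Sᶜ = 0 := Measure.restrict_eq_zero.2 hν
  have hle : μ.restrict S ≤ ν.restrict S := by rw [hνS]; exact h
  have split : ∀ ρ : Measure α, ρ univ = ρ.restrict S univ + ρ.restrict Sᶜ univ := fun ρ => by
    simp only [Measure.restrict_apply_univ, measure_add_measure_compl hS]
  rw [tvDist, split (μ - ν), split (ν - μ), Measure.restrict_sub_eq_restrict_sub_restrict hS,
    Measure.restrict_sub_eq_restrict_sub_restrict hS.compl,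
    Measure.restrict_sub_eq_restrict_sub_restrict hS,
    Measure.restrict_sub_eq_restrict_sub_restrict hS.compl, Measure.sub_eq_zero_of_le hle, hνSc,
    Measure.sub_zero, Measure.zero_sub, Measure.sub_apply MeasurableSet.univ hle, hνS]
  simp

theorem ConvexOn.map_add_sub_map_le_map_add_sub_map {s : Set ℝ} {f : ℝ → ℝ}
    (hf : ConvexOn ℝ s f) {x p δ : ℝ} (hx : x ∈ s) (hpδ : p + δ ∈ s) (hxp : x ≤ p)
    (hδ : 0 ≤ δ) : f (x + δ) - f x ≤ f (p + δ) - f p := by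
  rcases hδ.eq_or_lt with rfl | hδ
  · simp
  have hs := hf.1.ordConnected
  have hp : p ∈ s := hs.out hx hpδ ⟨hxp, by linarith⟩
  have h₁ := hf.secant_mono hx (hs.out hx hpδ ⟨by linarith, by linarith⟩) hpδ
    (by linarith) (by linarith) (by linarith : x + δ ≤ p + δ)
  have h₂ := hf.secant_mono hpδ hx hp (by linarith) (by linarith) hxp
  rw [add_sub_cancel_left] at h₁
  refine (div_le_div_iff_of_pos_right hδ).1 ?_
  calc (f (x + δ) - f x) / δ ≤ (f (p + δ) - f x) / (p + δ - x) := h₁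
    _ = (f x - f (p + δ)) / (x - (p + δ)) := by rw [← neg_div_neg_eq, neg_sub, neg_sub]
    _ ≤ (f p - f (p + δ)) / (p - (p + δ)) := h₂
    _ = (f (p + δ) - f p) / δ := by rw [← neg_div_neg_eq, neg_sub, neg_sub, add_sub_cancel_left]

theorem LipschitzOnWith.volume_image_le {g : ℝ → ℝ} {K : NNReal} {t : Set ℝ}
    (hg : LipschitzOnWith K g t) : volume (g '' t) ≤ K * volume t := by
  simpa [hausdorffMeasure_real] using hg.hausdorffMeasure_image_le zero_le_one

section IntervalMap

variable {a b : ℝ} {f finv : ℝ → ℝ}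

theorem ConvexOn.sub_le_of_map_sub_le (hf : ConvexOn ℝ (Icc a b) f)
    (hmono : StrictMonoOn f (Icc a b)) {x y x' y' : ℝ} (hx : x ∈ Icc a b) (hy' : y' ∈ Icc a b)
    (hxy : x ≤ y) (hxx' : x ≤ x') (h : f y' - f x' ≤ f y - f x) : y' - x' ≤ y - x := by
  rcases le_or_gt b (x' + (y - x)) with hb | hb
  · linarith [hy'.2]
  have hmem : x' + (y - x) ∈ Icc a b := ⟨by linarith [hx.1], hb.le⟩
  have := hf.map_add_sub_map_le_map_add_sub_map hx hmem hxx' (sub_nonneg.2 hxy)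
  rw [add_sub_cancel] at this
  have := (hmono.le_iff_le hy' hmem).1 (by linarith)
  linarith

theorem lipschitzOnWith_finv_map_add (hf : ConvexOn ℝ (Icc a b) f)
    (hmono : StrictMonoOn f (Icc a b))
    (hfinv' : ∀ y ∈ Icc (f a) (f b), finv y ∈ Icc a b ∧ f (finv y) = y) {u : ℝ} (hu : 0 ≤ u) :
    LipschitzOnWith 1 (fun y => finv (f y + u)) {y ∈ Icc a b | f y + u ≤ f b} := by
  have hg : ∀ y ∈ {y ∈ Icc a b | f y + u ≤ f b},
      finv (f y + u) ∈ Icc a b ∧ f (finv (f y + u)) = f y + u := fun y hy =>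
    hfinv' _ ⟨by linarith [hmono.monotoneOn ⟨le_rfl, hy.1.1.trans hy.1.2⟩ hy.1 hy.1.1], hy.2⟩
  refine LipschitzOnWith.of_dist_le_mul fun x hx y hy => ?_
  wlog hxy : x ≤ y generalizing x y
  · rw [dist_comm, dist_comm x]
    exact this y hy x hx (le_of_not_ge hxy)
  obtain ⟨hgx, hfgx⟩ := hg x hx
  obtain ⟨hgy, hfgy⟩ := hg y hy
  have hgxy : finv (f x + u) ≤ finv (f y + u) := by
    rw [← hmono.le_iff_le hgx hgy, hfgx, hfgy]
    linarith [hmono.monotoneOn hx.1 hy.1 hxy]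
  have hx_le : x ≤ finv (f x + u) := by
    rw [← hmono.le_iff_le hx.1 hgx, hfgx]
    linarith
  have := hf.sub_le_of_map_sub_le hmono hx.1 hgy hxy hx_le (by rw [hfgx, hfgy]; linarith)
  rw [Real.dist_eq, Real.dist_eq, abs_sub_comm, abs_of_nonneg (sub_nonneg.2 hgxy),
    abs_sub_comm, abs_of_nonneg (sub_nonneg.2 hxy), NNReal.coe_one, one_mul]
  exact this

theorem StrictMonoOn.preimage_Iio_inter_Icc (hf : StrictMonoOn f (Icc a b)) {x : ℝ}
    (hx : x ∈ Icc a b) : f ⁻¹' Iio (f x) ∩ Icc a b = Ico a x := by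
  ext y
  constructor
  · rintro ⟨hy, hyI⟩
    exact ⟨hyI.1, (hf.lt_iff_lt hyI hx).1 hy⟩
  · rintro ⟨hay, hyx⟩
    have hyI : y ∈ Icc a b := ⟨hay, hyx.le.trans hx.2⟩
    exact ⟨(hf.lt_iff_lt hyI hx).2 hyx, hyI⟩

theorem StrictMonoOn.preimage_Ici_inter_Icc (hf : StrictMonoOn f (Icc a b)) {x : ℝ}
    (hx : x ∈ Icc a b) : f ⁻¹' Ici (f x) ∩ Icc a b = Icc x b := by
  ext y
  constructor
  · rintro ⟨hy, hyI⟩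
    exact ⟨(hf.le_iff_le hx hyI).1 hy, hyI.2⟩
  · rintro ⟨hxy, hyb⟩
    have hyI : y ∈ Icc a b := ⟨hx.1.trans hxy, hyb⟩
    exact ⟨(hf.le_iff_le hx hyI).2 hxy, hyI⟩

theorem map_restrict_Icc_apply (hcont : ContinuousOn f (Icc a b)) {s : Set ℝ}
    (hs : MeasurableSet s) :
    (volume.restrict (Icc a b)).map f s = volume (f ⁻¹' s ∩ Icc a b) := by
  rw [Measure.map_apply_of_aemeasurable (hcont.aemeasurable measurableSet_Icc) hs,
    Measure.restrict_apply' measurableSet_Icc]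

theorem restrict_Ici_map_le_map_add (hf : ConvexOn ℝ (Icc a b) f)
    (hmono : StrictMonoOn f (Icc a b)) (hcont : ContinuousOn f (Icc a b))
    (hfinv : ∀ x ∈ Icc a b, finv (f x) = x)
    (hfinv' : ∀ y ∈ Icc (f a) (f b), finv y ∈ Icc a b ∧ f (finv y) = y) {u : ℝ} (hu : 0 ≤ u) :
    ((volume.restrict (Icc a b)).map f).restrict (Ici (f a + u)) ≤
      ((volume.restrict (Icc a b)).map f).map (· + u) := by
  refine Measure.le_iff.2 fun s hs => ?_
  rw [Measure.restrict_apply hs, map_restrict_Icc_apply hcont (hs.inter measurableSet_Ici),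
    Measure.map_apply (measurable_add_const u) hs,
    map_restrict_Icc_apply hcont (measurable_add_const u hs)]
  set B := (fun y => f y + u) ⁻¹' s ∩ {y ∈ Icc a b | f y + u ≤ f b}
  have hsub : f ⁻¹' (s ∩ Ici (f a + u)) ∩ Icc a b ⊆ (fun y => finv (f y + u)) '' B := by
    rintro x ⟨⟨hfxs, hfxu⟩, hx⟩
    have hfxb : f x ≤ f b := hmono.monotoneOn hx ⟨hx.1.trans hx.2, le_rfl⟩ hx.2
    obtain ⟨hy, hfy⟩ := hfinv' (f x - u) ⟨by linarith [mem_Ici.1 hfxu], by linarith⟩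
    refine ⟨finv (f x - u), ⟨?_, hy, ?_⟩, ?_⟩
    · show f (finv (f x - u)) + u ∈ s
      rwa [hfy, sub_add_cancel]
    · rwa [hfy, sub_add_cancel]
    · simp only [hfy, sub_add_cancel, hfinv x hx]
  calc volume (f ⁻¹' (s ∩ Ici (f a + u)) ∩ Icc a b)
      ≤ volume ((fun y => finv (f y + u)) '' B) := measure_mono hsub
    _ ≤ volume B := by
      refine ((lipschitzOnWith_finv_map_add hf hmono hfinv' hu).mono
        inter_subset_right).volume_image_le.trans_eq ?_
      rw [ENNReal.coe_one, one_mul]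
    _ ≤ volume (f ⁻¹' ((· + u) ⁻¹' s) ∩ Icc a b) :=
      measure_mono (inter_subset_inter_right _ fun _ hy => hy.1)

end IntervalMap

theorem stmt12_general (a b : ℝ) (f finv : ℝ → ℝ)
    (hconv : ConvexOn ℝ (Set.Icc a b) f)
    (hmono : StrictMonoOn f (Set.Icc a b))
    (hcont : ContinuousOn f (Set.Icc a b))
    (hfinv : ∀ x ∈ Set.Icc a b, finv (f x) = x)
    (hfinv' : ∀ y ∈ Set.Icc (f a) (f b), finv y ∈ Set.Icc a b ∧ f (finv y) = y)
    (u : ℝ) (hu0 : 0 ≤ u) (hub : u ≤ f b - f a) :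
    tvDist ((volume.restrict (Set.Icc a b)).map f)
        (((volume.restrict (Set.Icc a b)).map f).map (fun y => y + u)) =
      2 * (finv (f a + u) - a) := by
  obtain ⟨hx₀, hfx₀⟩ := hfinv' (f a + u) ⟨by linarith, by linarith⟩
  set x₀ := finv (f a + u)
  set μ := (volume.restrict (Icc a b)).map f
  have hν : ∀ s, MeasurableSet s →
      μ.map (· + u) s = volume ((fun x => f x + u) ⁻¹' s ∩ Icc a b) := fun s hs => by
    rw [Measure.map_apply (measurable_add_const u) hs,
      map_restrict_Icc_apply hcont (measurable_add_const u hs)]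
    rfl
  have hνIio : μ.map (· + u) (Ici (f a + u))ᶜ = 0 := by
    rw [compl_Ici, hν _ measurableSet_Iio, ← measure_empty (μ := (volume : Measure ℝ))]
    congr 1
    refine eq_empty_of_forall_notMem fun x ⟨hx, hxI⟩ => ?_
    have := hmono.monotoneOn ⟨le_rfl, hxI.1.trans hxI.2⟩ hxI hxI.1
    exact (show f x + u < f a + u from hx).not_ge (by linarith)
  have hμIio : μ (Iio (f a + u)) = ENNReal.ofReal (x₀ - a) := by
    rw [map_restrict_Icc_apply hcont measurableSet_Iio, ← hfx₀,
      hmono.preimage_Iio_inter_Icc hx₀, Real.volume_Ico]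
  have hμIci : μ (Ici (f a + u)) = ENNReal.ofReal (b - x₀) := by
    rw [map_restrict_Icc_apply hcont measurableSet_Ici, ← hfx₀,
      hmono.preimage_Ici_inter_Icc hx₀, Real.volume_Icc]
  have hνuniv : μ.map (· + u) univ = ENNReal.ofReal (b - a) := by
    rw [hν _ MeasurableSet.univ, preimage_univ, univ_inter, Real.volume_Icc]
  rw [tvDist_eq_of_restrict_le measurableSet_Ici hνIio
      (restrict_Ici_map_le_map_add hconv hmono hcont hfinv hfinv' hu0),
    compl_Ici, hμIio, hμIci, hνuniv, ← ENNReal.ofReal_sub _ (by linarith [hx₀.2]),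
    ← ENNReal.ofReal_add (by linarith [hx₀.1]) (by linarith [hx₀.1]),
    ENNReal.toReal_ofReal (by linarith [hx₀.1])]
  ring

/-- For `f` convex, strictly increasing and continuous on `[a,b]`, with differentiable
inverse on `(f(a), f(b))` and strictly positive derivative of `f`, and `λ` Lebesgue measure
restricted to `[a,b]`, for every `0 ≤ u ≤ f(b) - f(a)` the total variation distance between
`λ∘f⁻¹` and its translate by `u` (the pushforward under `f_u(t) = f(t-u)`) equals
`2 (f⁻¹(f(a) + u) - a)`. -/
theorem stmt12 (a b : ℝ) (hab : a < b) (f finv : ℝ → ℝ)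
    (hconv : ConvexOn ℝ (Set.Icc a b) f)
    (hmono : StrictMonoOn f (Set.Icc a b))
    (hcont : ContinuousOn f (Set.Icc a b))
    (hfinv : ∀ x ∈ Set.Icc a b, finv (f x) = x)
    (hfinv' : ∀ y ∈ Set.Icc (f a) (f b), finv y ∈ Set.Icc a b ∧ f (finv y) = y)
    (hfinvdiff : ∀ y ∈ Set.Ioo (f a) (f b), DifferentiableAt ℝ finv y)
    (hpos : ∀ x ∈ Set.Ioo a b, 0 < deriv f x)
    (u : ℝ) (hu0 : 0 ≤ u) (hub : u ≤ f b - f a) :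
    tvDist ((volume.restrict (Set.Icc a b)).map f)
        (((volume.restrict (Set.Icc a b)).map f).map (fun y => y + u)) =
      2 * (finv (f a + u) - a) :=
  stmt12_general a b f finv hconv hmono hcont hfinv hfinv' u hu0 hub
end
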